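/- arXiv:2011.04810 — 5 statements merged into one kernel-verified Lean document; each statement's English description precedes it below -/
import Mathlib

section
/- There exists a constant C > 0 such that for every continuously differentiable function f : ℝ³ → ℝ with compact support, ‖f‖_{L⁴(ℝ³)} ≤ C ‖∇f‖_{L²(ℝ³)}^{1/2} ‖f‖_{L³(ℝ³)}^{1/2}. -/
/-!
Hölder's inequality with `1/2 = 1/6 + 1/3` gives `‖f‖₄² = ‖|f|²‖₂ ≤ ‖f‖₆ ‖f‖₃`, and in dimension
three the Gagliardo–Nirenberg–Sobolev inequality bounds `‖f‖₆` by `C ‖∇f‖₂` (`6 = 3·2/(3-2)`).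
Taking square roots gives the claim.
-/

open MeasureTheory ENNReal NNReal Module

theorem eLpNorm_mul_two_rpow_two_le_eLpNorm_mul_eLpNorm {α E : Type*} [MeasurableSpace α]
    {μ : Measure α} [NormedAddCommGroup E] {f : α → E} (hf : AEStronglyMeasurable f μ)
    (p q r : ℝ≥0∞) [HolderTriple p q r] :
    eLpNorm f (r * 2) μ ^ (2 : ℝ) ≤ eLpNorm f p μ * eLpNorm f q μ := by
  have h := eLpNorm_le_eLpNorm_mul_eLpNorm'_of_norm (p := p) (q := q) (r := r) hf hf
    (fun x y => ‖x‖ * ‖y‖) 1 (ae_of_all _ fun x => by simp)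
  rw [← ENNReal.ofReal_ofNat 2, ← eLpNorm_norm_rpow f two_pos]
  simpa [← sq] using h

theorem MeasureTheory.MemLp.integral_norm_pow_rpow_inv_eq_toReal_eLpNorm {α E : Type*} [MeasurableSpace α]
    {μ : Measure α} [NormedAddCommGroup E] {f : α → E} (p : ℕ) [NeZero p] (hf : MemLp f p μ) :
    (∫ x, ‖f x‖ ^ p ∂μ) ^ ((1 : ℝ) / p) = (eLpNorm f p μ).toReal := by
  rw [hf.eLpNorm_eq_integral_rpow_norm (by simp [NeZero.ne p]) (by simp),
    ENNReal.toReal_ofReal (by positivity)]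
  simp [one_div]

theorem le_rpow_half_mul_rpow_half_mul_rpow_half_of_sq_le {a b c d : ℝ} (hb : 0 ≤ b)
    (hc : 0 ≤ c) (h : a ^ 2 ≤ b * c * d) :
    a ≤ b ^ ((1 : ℝ) / 2) * c ^ ((1 : ℝ) / 2) * d ^ ((1 : ℝ) / 2) := by
  rw [← Real.sqrt_eq_rpow, ← Real.sqrt_eq_rpow, ← Real.sqrt_eq_rpow, ← Real.sqrt_mul hb,
    ← Real.sqrt_mul (mul_nonneg hb hc)]
  exact Real.le_sqrt_of_sq_le h

section DimensionThree

variable {E F : Type*} [NormedAddCommGroup E] [NormedSpace ℝ E] [MeasurableSpace E]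
  [BorelSpace E] [FiniteDimensional ℝ E] (μ : Measure E) [μ.IsAddHaarMeasure]
  [NormedAddCommGroup F] [InnerProductSpace ℝ F]

theorem exists_eLpNorm_six_le_eLpNorm_fderiv_two (hE : finrank ℝ E = 3) :
    ∃ C : ℝ≥0, ∀ f : E → F, ContDiff ℝ 1 f → HasCompactSupport f →
      eLpNorm f 6 μ ≤ C * eLpNorm (fderiv ℝ f) 2 μ :=
  ⟨_, fun _ hf h2f => by
    simpa using eLpNorm_le_eLpNorm_fderiv_of_eq_inner μ hf h2f (p := 2) (p' := 6)
      one_le_two (by simp [hE]) (by simp [hE]; norm_num)⟩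

theorem exists_eLpNorm_four_sq_le_eLpNorm_fderiv_two_mul_eLpNorm_three
    (hE : finrank ℝ E = 3) :
    ∃ C : ℝ≥0, ∀ f : E → F, ContDiff ℝ 1 f → HasCompactSupport f →
      eLpNorm f 4 μ ^ (2 : ℝ) ≤ C * eLpNorm (fderiv ℝ f) 2 μ * eLpNorm f 3 μ := by
  obtain ⟨C, hC⟩ := exists_eLpNorm_six_le_eLpNorm_fderiv_two (F := F) μ hE
  have : HolderTriple (6 : ℝ≥0∞) 3 2 := ⟨by
    rw [← ENNReal.toReal_eq_toReal_iff' (by simp) (by simp),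
      ENNReal.toReal_add (by simp) (by simp)]
    norm_num⟩
  refine ⟨C, fun f hf h2f => ?_⟩
  calc eLpNorm f 4 μ ^ (2 : ℝ) = eLpNorm f (2 * 2) μ ^ (2 : ℝ) := by norm_num
    _ ≤ eLpNorm f 6 μ * eLpNorm f 3 μ :=
      eLpNorm_mul_two_rpow_two_le_eLpNorm_mul_eLpNorm hf.continuous.aestronglyMeasurable 6 3 2
    _ ≤ C * eLpNorm (fderiv ℝ f) 2 μ * eLpNorm f 3 μ := by
      gcongr
      exact hC f hf h2f

end DimensionThree

/-- Gagliardo–Nirenberg: `‖f‖_{L⁴(ℝ³)} ≤ C ‖∇f‖_{L²}^{1/2} ‖f‖_{L³}^{1/2}` (Lemma 2.2 instance). -/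
theorem stmt_1 :
    ∃ C > 0, ∀ f : EuclideanSpace ℝ (Fin 3) → ℝ,
      ContDiff ℝ 1 f → HasCompactSupport f →
      (∫ x, |f x| ^ 4) ^ ((1:ℝ)/4) ≤
        C * ((∫ x, ‖fderiv ℝ f x‖ ^ 2) ^ ((1:ℝ)/2)) ^ ((1:ℝ)/2)
          * ((∫ x, |f x| ^ 3) ^ ((1:ℝ)/3)) ^ ((1:ℝ)/2) := by
  obtain ⟨C, hC⟩ := exists_eLpNorm_four_sq_le_eLpNorm_fderiv_two_mul_eLpNorm_three
    (F := ℝ) volume (finrank_euclideanSpace_fin (𝕜 := ℝ) (n := 3))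
  refine ⟨(C : ℝ) ^ ((1 : ℝ) / 2) + 1, by positivity, fun f hf h2f => ?_⟩
  have hf_memLp (p : ℝ≥0∞) : MemLp f p volume := hf.continuous.memLp_of_hasCompactSupport h2f
  have hdf_memLp (p : ℝ≥0∞) : MemLp (fderiv ℝ f) p volume :=
    (hf.continuous_fderiv one_ne_zero).memLp_of_hasCompactSupport (h2f.fderiv (𝕜 := ℝ))
  have hsq : (eLpNorm f 4 volume).toReal ^ 2 ≤
      C * (eLpNorm (fderiv ℝ f) 2 volume).toReal * (eLpNorm f 3 volume).toReal := by
    have := (hdf_memLp 2).eLpNorm_ne_top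
    have := (hf_memLp 3).eLpNorm_ne_top
    simpa [ENNReal.toReal_mul] using ENNReal.toReal_mono (by finiteness) (hC f hf h2f)
  have h4 := (hf_memLp 4).integral_norm_pow_rpow_inv_eq_toReal_eLpNorm 4
  have h2 := (hdf_memLp 2).integral_norm_pow_rpow_inv_eq_toReal_eLpNorm 2
  have h3 := (hf_memLp 3).integral_norm_pow_rpow_inv_eq_toReal_eLpNorm 3
  push_cast at h4 h2 h3
  simp_rw [← Real.norm_eq_abs, h4, h2, h3]
  calc (eLpNorm f 4 volume).toReal
      ≤ (C : ℝ) ^ ((1 : ℝ) / 2) * (eLpNorm (fderiv ℝ f) 2 volume).toReal ^ ((1 : ℝ) / 2)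
          * (eLpNorm f 3 volume).toReal ^ ((1 : ℝ) / 2) :=
        le_rpow_half_mul_rpow_half_mul_rpow_half_of_sq_le C.coe_nonneg toReal_nonneg hsq
    _ ≤ _ := by gcongr; linarith
end

section
/- Let γ > 1 and 0 < a < b < ∞. Then there exists a constant C = C(a,b,γ) > 0 such that for all ρ ∈ [0,∞) and all r ∈ [a,b]: (i) if r/2 ≤ ρ ≤ 2r then E(ρ|r) ≥ C |ρ − r|²; (ii) if ρ < r/2 or ρ > 2r then E(ρ|r) ≥ C (1 + ρ^γ). -/
/-!
Scaling out `r` gives `E(ρ|r) = r^γ φ(ρ/r) / (γ - 1)` with `φ(s) = s^γ - 1 - γ (s - 1)`, so it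
suffices to bound the convex function `φ`, which vanishes to second order at `s = 1`. Each bound is
a tangent-line inequality for a convex function: `φ - c (s - 1)^2` at `1` (convex on `[1/2, 2]`
because `φ'' = γ (γ - 1) s^(γ-2)` is bounded below there), `φ` itself at `1/2`, and `φ - θ s^γ`
at `2`. Since `r` ranges over `[a, b]`, the factor `r^γ` and its rescalings are bounded below.
-/

/-- The pressure potential `P(s) = (s^γ − s)/(γ − 1)` associated with `p(s) = s^γ`. -/
noncomputable def Ppot (γ : ℝ) : ℝ → ℝ := fun s => (s ^ γ - s) / (γ - 1)

/-- The relative pressure energy `E(ρ|r) = P(ρ) − P'(r)(ρ − r) − P(r)`. -/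
noncomputable def relE (γ ρ r : ℝ) : ℝ :=
  Ppot γ ρ - deriv (Ppot γ) r * (ρ - r) - Ppot γ r

open Real Set

lemma ConvexOn.add_mul_sub_le_of_hasDerivAt {S : Set ℝ} {f : ℝ → ℝ} {f' x y : ℝ}
    (hf : ConvexOn ℝ S f) (hx : x ∈ S) (hy : y ∈ S) (hfx : HasDerivAt f f' x) :
    f x + f' * (y - x) ≤ f y := by
  rcases lt_trichotomy x y with hxy | rfl | hxy
  · have := hf.le_slope_of_hasDerivAt hx hy hxy hfx
    rw [slope_def_field, le_div_iff₀ (sub_pos.2 hxy)] at this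
    linarith
  · simp
  · have := hf.slope_le_of_hasDerivAt hy hx hxy hfx
    rw [slope_def_field, div_le_iff₀ (sub_pos.2 hxy)] at this
    linarith

lemma ConvexOn.add_affine {S : Set ℝ} {f : ℝ → ℝ} (hf : ConvexOn ℝ S f) (c d : ℝ) :
    ConvexOn ℝ S (fun x => f x + (c * x + d)) := by
  refine ⟨hf.1, fun x hx y hy a b ha hb hab => ?_⟩
  have := hf.2 hx hy ha hb hab
  simp only [smul_eq_mul] at *
  linear_combination this - d * hab

lemma min_rpow_le_rpow_of_mem_Icc {p q x e : ℝ} (hp : 0 < p) (hx : x ∈ Icc p q) :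
    min (p ^ e) (q ^ e) ≤ x ^ e := by
  rcases le_total 0 e with he | he
  · exact (min_le_left _ _).trans (rpow_le_rpow hp.le hx.1 he)
  · exact (min_le_right _ _).trans (rpow_le_rpow_of_nonpos (hp.trans_le hx.1) hx.2 he)

noncomputable def rpowBregman (γ s : ℝ) : ℝ := s ^ γ - 1 - γ * (s - 1)

section
variable {γ : ℝ}

lemma relE_eq_rpowBregman {ρ r : ℝ} (hρ : 0 ≤ ρ) (hr : 0 < r) :
    relE γ ρ r = r ^ γ * rpowBregman γ (ρ / r) / (γ - 1) := by
  have hP : HasDerivAt (Ppot γ) ((γ * r ^ (γ - 1) - 1) / (γ - 1)) r :=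
    ((hasDerivAt_rpow_const (Or.inl hr.ne')).sub (hasDerivAt_id r)).div_const (γ - 1)
  have hρ' : r ^ γ * (ρ / r) ^ γ = ρ ^ γ := by
    rw [div_rpow hρ hr.le, mul_div_cancel₀ _ (rpow_pos_of_pos hr γ).ne']
  have hr' : r ^ (γ - 1) * r = r ^ γ := by
    rw [rpow_sub_one hr.ne', div_mul_cancel₀ _ hr.ne']
  rw [relE, hP.deriv, Ppot, Ppot, rpowBregman, ← hρ', ← hr']
  field_simp
  ring

lemma hasDerivAt_rpowBregman (hγ : 1 ≤ γ) (s : ℝ) :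
    HasDerivAt (rpowBregman γ) (γ * (s ^ (γ - 1) - 1)) s :=
  (((hasDerivAt_rpow_const (Or.inr hγ)).sub_const 1).sub
    (((hasDerivAt_id s).sub_const 1).const_mul γ)).congr_deriv (by ring)

lemma convexOn_rpowBregman (hγ : 1 ≤ γ) : ConvexOn ℝ (Ici 0) (rpowBregman γ) := by
  convert (convexOn_rpow hγ).add_affine (-γ) (γ - 1) using 1
  ext s
  rw [rpowBregman]
  ring

lemma rpowBregman_one : rpowBregman γ 1 = 0 := by simp [rpowBregman]

lemma exists_mul_sq_le_rpowBregman (hγ : 1 < γ) :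
    ∃ c > 0, ∀ s ∈ Icc (1 / 2 : ℝ) 2, c * (s - 1) ^ 2 ≤ rpowBregman γ s := by
  set m := min ((1 / 2 : ℝ) ^ (γ - 2)) (2 ^ (γ - 2))
  set c := γ * (γ - 1) * m / 2
  have hc : 0 < c :=
    div_pos (mul_pos (mul_pos (by linarith) (by linarith)) (lt_min (by positivity) (by positivity)))
      two_pos
  refine ⟨c, hc, fun s hs => ?_⟩
  have hderiv (t : ℝ) : HasDerivAt (fun t => rpowBregman γ t - c * (t - 1) ^ 2)
      (γ * (t ^ (γ - 1) - 1) - c * (2 * (t - 1))) t :=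
    (hasDerivAt_rpowBregman hγ.le t).sub
      ((((hasDerivAt_id t).sub_const 1).pow 2).const_mul c |>.congr_deriv (by simp))
  have hconv : ConvexOn ℝ (Icc (1 / 2) 2) (fun t => rpowBregman γ t - c * (t - 1) ^ 2) := by
    refine convexOn_of_hasDerivWithinAt2_nonneg (convex_Icc _ _)
      (fun t _ => (hderiv t).continuousAt.continuousWithinAt)
      (fun t _ => (hderiv t).hasDerivWithinAt)
      (f'' := fun t => γ * ((γ - 1) * t ^ (γ - 2)) - c * 2) ?_ ?_
    · intro t ht
      rw [interior_Icc] at ht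
      have ht0 : t ≠ 0 := (lt_trans (by norm_num) ht.1).ne'
      have := (hasDerivAt_rpow_const (p := γ - 1) (Or.inl ht0)).sub_const 1 |>.const_mul γ |>.sub
        ((((hasDerivAt_id t).sub_const 1).const_mul 2).const_mul c)
      rw [show γ - 1 - 1 = γ - 2 by ring] at this
      exact this.hasDerivWithinAt.congr_deriv (by simp)
    · intro t ht
      rw [interior_Icc] at ht
      have : m ≤ t ^ (γ - 2) := min_rpow_le_rpow_of_mem_Icc (by norm_num) (Ioo_subset_Icc_self ht)
      have : 0 ≤ γ * (γ - 1) := mul_nonneg (by linarith) (by linarith)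
      simp only [c]
      nlinarith
  have key := hconv.add_mul_sub_le_of_hasDerivAt (x := 1) ⟨by norm_num, by norm_num⟩ hs (hderiv 1)
  norm_num [rpowBregman_one] at key
  linarith

lemma rpowBregman_half_le (hγ : 1 ≤ γ) {s : ℝ} (hs₀ : 0 ≤ s) (hs : s ≤ 1 / 2) :
    rpowBregman γ (1 / 2) ≤ rpowBregman γ s := by
  have key := (convexOn_rpowBregman hγ).add_mul_sub_le_of_hasDerivAt
    (show (1 / 2 : ℝ) ∈ Ici 0 by norm_num) hs₀ (hasDerivAt_rpowBregman hγ (1 / 2))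
  have : (1 / 2 : ℝ) ^ (γ - 1) ≤ 1 := rpow_le_one (by norm_num) (by norm_num) (by linarith)
  nlinarith [mul_nonneg (sub_nonneg.2 this) (sub_nonneg.2 hs)]

lemma rpowBregman_half_pos (hγ : 1 < γ) : 0 < rpowBregman γ (1 / 2) := by
  have := one_add_mul_self_lt_rpow_one_add (s := -1 / 2) (by norm_num) (by norm_num) hγ
  norm_num [rpowBregman] at this ⊢
  linarith

lemma mul_rpow_le_rpowBregman (hγ : 1 ≤ γ) {s : ℝ} (hs : 2 ≤ s) :
    (1 - (1 + γ) / 2 ^ γ) * s ^ γ ≤ rpowBregman γ s := by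
  -- This `κ` makes the convex function `φ(s) - (1 - κ) s^γ = κ s^γ - γ s + (γ - 1)` vanish at
  -- `s = 2`, with slope `γ (γ - 1) / 2 ≥ 0` there.
  set κ := (1 + γ) / 2 ^ γ
  have hκ : κ * 2 ^ γ = 1 + γ := div_mul_cancel₀ _ (by positivity)
  have hconv := ((convexOn_rpow hγ).smul (c := κ) (by positivity)).add_affine (-γ) (γ - 1)
  have hderiv : HasDerivAt (fun x : ℝ => κ • x ^ γ + (-γ * x + (γ - 1)))
      (κ * (γ * 2 ^ (γ - 1)) + -γ) 2 :=
    ((hasDerivAt_rpow_const (Or.inr hγ)).const_mul κ).add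
      (((hasDerivAt_id 2).const_mul (-γ)).add_const (γ - 1) |>.congr_deriv (by simp))
  have key := hconv.add_mul_sub_le_of_hasDerivAt (show (2 : ℝ) ∈ Ici 0 by norm_num)
    (show s ∈ Ici 0 from zero_le_two.trans hs) hderiv
  have hκ' : κ * (γ * 2 ^ (γ - 1)) = γ * (1 + γ) / 2 := by
    rw [rpow_sub_one two_ne_zero, ← hκ]
    ring
  simp only [smul_eq_mul, hκ, hκ'] at key
  rw [rpowBregman]
  nlinarith [mul_nonneg (mul_nonneg (by linarith : 0 ≤ γ) (by linarith : 0 ≤ γ - 1)) (sub_nonneg.2 hs)]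

lemma exists_mul_one_add_rpow_le_rpowBregman (hγ : 1 < γ) :
    ∃ κ > 0, ∀ s, 0 ≤ s → (s < 1 / 2 ∨ 2 < s) → κ * (1 + s ^ γ) ≤ rpowBregman γ s := by
  set θ := 1 - (1 + γ) / 2 ^ γ
  have hθ : 0 < θ := by
    have := one_add_mul_self_lt_rpow_one_add (s := 1) (by norm_num) one_ne_zero hγ
    rw [sub_pos, div_lt_one (by positivity)]
    norm_num at this
    linarith
  have hhalf := rpowBregman_half_pos hγ
  refine ⟨min (rpowBregman γ (1 / 2) / 2) (θ / 2), lt_min (by linarith) (by linarith), ?_⟩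
  rintro s hs₀ (hs | hs)
  · have : s ^ γ ≤ 1 := rpow_le_one hs₀ (by linarith) (by linarith)
    calc _ ≤ rpowBregman γ (1 / 2) / 2 * (1 + s ^ γ) :=
          mul_le_mul_of_nonneg_right (min_le_left _ _) (by linarith [rpow_nonneg hs₀ γ])
      _ ≤ rpowBregman γ (1 / 2) := by nlinarith
      _ ≤ _ := rpowBregman_half_le hγ.le hs₀ hs.le
  · have : 1 ≤ s ^ γ := one_le_rpow (by linarith) (by linarith)
    calc _ ≤ θ / 2 * (1 + s ^ γ) := mul_le_mul_of_nonneg_right (min_le_right _ _) (by linarith)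
      _ ≤ θ * s ^ γ := by nlinarith
      _ ≤ _ := mul_rpow_le_rpowBregman hγ.le hs.le

lemma exists_mul_sq_le_relE (hγ : 1 < γ) {a b : ℝ} (ha : 0 < a) (hb : 0 < b) :
    ∃ C > 0, ∀ ρ r, r ∈ Icc a b → r / 2 ≤ ρ → ρ ≤ 2 * r → C * (ρ - r) ^ 2 ≤ relE γ ρ r := by
  obtain ⟨c, hc, hquad⟩ := exists_mul_sq_le_rpowBregman hγ
  have hγ₁ : 0 < γ - 1 := by linarith
  refine ⟨c * min (a ^ (γ - 2)) (b ^ (γ - 2)) / (γ - 1), by positivity,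
    fun ρ r hr hρ₁ hρ₂ => ?_⟩
  have hr₀ : 0 < r := ha.trans_le hr.1
  have hs : ρ / r ∈ Icc (1 / 2 : ℝ) 2 :=
    ⟨by rw [le_div_iff₀ hr₀]; linarith, by rw [div_le_iff₀ hr₀]; linarith⟩
  have hscale : r ^ γ * (ρ / r - 1) ^ 2 = r ^ (γ - 2) * (ρ - r) ^ 2 := by
    rw [show r ^ γ = r ^ (γ - 2) * r ^ 2 by rw [← rpow_natCast, ← rpow_add hr₀]; norm_num]
    field_simp
  rw [relE_eq_rpowBregman (by linarith) hr₀, div_mul_eq_mul_div, div_le_div_iff_of_pos_right hγ₁]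
  calc c * min (a ^ (γ - 2)) (b ^ (γ - 2)) * (ρ - r) ^ 2 ≤ c * (r ^ (γ - 2) * (ρ - r) ^ 2) := by
        rw [mul_assoc]
        gcongr
        exact min_rpow_le_rpow_of_mem_Icc ha hr
    _ = r ^ γ * (c * (ρ / r - 1) ^ 2) := by rw [← hscale]; ring
    _ ≤ r ^ γ * rpowBregman γ (ρ / r) := by gcongr; exact hquad _ hs

lemma exists_mul_one_add_rpow_le_relE (hγ : 1 < γ) {a : ℝ} (ha : 0 < a) :
    ∃ C > 0, ∀ ρ r, 0 ≤ ρ → a ≤ r → (ρ < r / 2 ∨ 2 * r < ρ) →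
      C * (1 + ρ ^ γ) ≤ relE γ ρ r := by
  obtain ⟨κ, hκ, hfar⟩ := exists_mul_one_add_rpow_le_rpowBregman hγ
  have hγ₁ : 0 < γ - 1 := by linarith
  set μ := min 1 (a ^ γ)
  have hμ : 0 < μ := lt_min one_pos (by positivity)
  refine ⟨κ * μ / (γ - 1), by positivity, fun ρ r hρ har h => ?_⟩
  have hr₀ : 0 < r := ha.trans_le har
  have hs : ρ / r < 1 / 2 ∨ 2 < ρ / r := by
    rw [div_lt_iff₀ hr₀, lt_div_iff₀ hr₀]
    rcases h with h | h
    · left; linarith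
    · right; linarith
  have hscale : r ^ γ * (1 + (ρ / r) ^ γ) = r ^ γ + ρ ^ γ := by
    rw [div_rpow hρ hr₀.le]
    field_simp
  have hμρ : μ * (1 + ρ ^ γ) ≤ r ^ γ + ρ ^ γ := by
    have h₁ : μ ≤ r ^ γ := (min_le_right _ _).trans (rpow_le_rpow ha.le har (by linarith))
    have h₂ : μ * ρ ^ γ ≤ ρ ^ γ :=
      mul_le_of_le_one_left (rpow_nonneg hρ γ) (min_le_left _ _)
    linarith
  rw [relE_eq_rpowBregman hρ hr₀, div_mul_eq_mul_div, div_le_div_iff_of_pos_right hγ₁]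
  calc κ * μ * (1 + ρ ^ γ) ≤ κ * (r ^ γ + ρ ^ γ) := by rw [mul_assoc]; gcongr
    _ = r ^ γ * (κ * (1 + (ρ / r) ^ γ)) := by rw [← hscale]; ring
    _ ≤ r ^ γ * rpowBregman γ (ρ / r) := by
        gcongr
        exact hfar _ (div_nonneg hρ hr₀.le) hs

end

/-- Coercivity of the relative energy density (Lemma 3.2). -/
theorem stmt_3 (γ a b : ℝ) (hγ : 1 < γ) (ha : 0 < a) (hab : a < b) :
    ∃ C > 0, ∀ ρ r : ℝ, 0 ≤ ρ → r ∈ Set.Icc a b →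
      ((r / 2 ≤ ρ ∧ ρ ≤ 2 * r) → C * |ρ - r| ^ 2 ≤ relE γ ρ r) ∧
      ((ρ < r / 2 ∨ 2 * r < ρ) → C * (1 + ρ ^ γ) ≤ relE γ ρ r) := by
  obtain ⟨C₁, hC₁, hquad⟩ := exists_mul_sq_le_relE hγ ha (ha.trans hab)
  obtain ⟨C₂, hC₂, hfar⟩ := exists_mul_one_add_rpow_le_relE hγ ha
  refine ⟨min C₁ C₂, lt_min hC₁ hC₂, fun ρ r hρ hr => ⟨fun ⟨hρ₁, hρ₂⟩ => ?_, fun h => ?_⟩⟩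
  · rw [sq_abs]
    exact (mul_le_mul_of_nonneg_right (min_le_left _ _) (sq_nonneg _)).trans
      (hquad ρ r hr hρ₁ hρ₂)
  · exact (mul_le_mul_of_nonneg_right (min_le_right _ _)
      (by linarith [rpow_nonneg hρ γ])).trans (hfar ρ r hρ hr.1 h)
end

section
/- Let γ > 1 and 0 < a < b < ∞. Then there exists a constant C = C(a,b,γ) > 0 such that for all ρ ∈ [0,∞) and all r ∈ [a,b]: 0 ≤ p(ρ) − p'(r)(ρ − r) − p(r) ≤ C · E(ρ|r), where p(s) = s^γ. -/
/-!
Since `P(s) = (p(s) − s)/(γ − 1)` differs from `p/(γ − 1)` by an affine function, the relative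
energy `E(ρ|r)` is exactly the pressure excess divided by `γ − 1`; so `C = γ − 1` works, and the
excess is nonnegative because the convex function `s ↦ s^γ` lies above its tangent at `r`, which is
Bernoulli's inequality for `ρ/r`.
-/

theorem rpow_tangent_le {γ ρ r : ℝ} (hγ : 1 ≤ γ) (hρ : 0 ≤ ρ) (hr : 0 < r) :
    r ^ γ + γ * r ^ (γ - 1) * (ρ - r) ≤ ρ ^ γ := by
  have hbernoulli : 1 + γ * (ρ / r - 1) ≤ (ρ / r) ^ γ := by
    simpa using one_add_mul_self_le_rpow_one_add (s := ρ / r - 1)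
      (by linarith [div_nonneg hρ hr.le]) hγ
  have hrγ : 0 < r ^ γ := Real.rpow_pos_of_pos hr γ
  calc r ^ γ + γ * r ^ (γ - 1) * (ρ - r)
      = r ^ γ * (1 + γ * (ρ / r - 1)) := by
        rw [Real.rpow_sub hr, Real.rpow_one]; field_simp
    _ ≤ r ^ γ * (ρ / r) ^ γ := mul_le_mul_of_nonneg_left hbernoulli hrγ.le
    _ = ρ ^ γ := by rw [Real.div_rpow hρ hr.le, mul_div_cancel₀ _ hrγ.ne']

theorem hasDerivAt_Ppot {γ r : ℝ} (h : r ≠ 0 ∨ 1 ≤ γ) :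
    HasDerivAt (Ppot γ) ((γ * r ^ (γ - 1) - 1) / (γ - 1)) r :=
  ((Real.hasDerivAt_rpow_const h).sub (hasDerivAt_id r)).div_const (γ - 1)

theorem relE_eq {γ ρ r : ℝ} (hγ : γ ≠ 1) (h : r ≠ 0 ∨ 1 ≤ γ) :
    relE γ ρ r = (ρ ^ γ - γ * r ^ (γ - 1) * (ρ - r) - r ^ γ) / (γ - 1) := by
  have hγ1 : γ - 1 ≠ 0 := sub_ne_zero.2 hγ
  rw [relE, (hasDerivAt_Ppot h).deriv, Ppot, Ppot]
  field_simp
  ring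

theorem stmt_5_general (γ a b : ℝ) (hγ : 1 < γ) (ha : 0 < a) :
    ∃ C > 0, ∀ ρ r : ℝ, 0 ≤ ρ → r ∈ Set.Icc a b →
      0 ≤ ρ ^ γ - deriv (fun s : ℝ => s ^ γ) r * (ρ - r) - r ^ γ ∧
      ρ ^ γ - deriv (fun s : ℝ => s ^ γ) r * (ρ - r) - r ^ γ ≤ C * relE γ ρ r := by
  refine ⟨γ - 1, sub_pos.2 hγ, fun ρ r hρ hr => ?_⟩
  have hr0 : 0 < r := ha.trans_le hr.1
  rw [Real.deriv_rpow_const, relE_eq hγ.ne' (Or.inl hr0.ne'),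
    mul_div_cancel₀ _ (sub_pos.2 hγ).ne']
  exact ⟨by linarith [rpow_tangent_le hγ.le hρ hr0], le_rfl⟩

/-- The pressure excess `p(ρ) − p'(r)(ρ − r) − p(r)`, `p(s) = s^γ`, is nonnegative and
dominated by a constant multiple of the relative energy, uniformly for `r ∈ [a,b]`. -/
theorem stmt_5 (γ a b : ℝ) (hγ : 1 < γ) (ha : 0 < a) (hab : a < b) :
    ∃ C > 0, ∀ ρ r : ℝ, 0 ≤ ρ → r ∈ Set.Icc a b →
      0 ≤ ρ ^ γ - deriv (fun s : ℝ => s ^ γ) r * (ρ - r) - r ^ γ ∧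
      ρ ^ γ - deriv (fun s : ℝ => s ^ γ) r * (ρ - r) - r ^ γ ≤ C * relE γ ρ r :=
  stmt_5_general γ a b hγ ha
end

section
/- Let γ > 1, 0 < a < b < ∞, and let (X, μ) be a finite measure space. Then there exists a constant C = C(a,b,γ) > 0 such that for every measurable ρ : X → [0,∞) and every measurable r : X → [a,b], the following three inequalities hold: (i) ∫_{{ρ ≥ 2r}} ρ^γ dμ ≤ C ∫_X E(ρ|r) dμ; (ii) μ({ρ ≤ r/2}) ≤ C ∫_X E(ρ|r) dμ; (iii) ∫_{{r/2 < ρ < 2r}} (ρ − r)² dμ ≤ C ∫_X E(ρ|r) dμ. -/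
open MeasureTheory

/-- Bernoulli/Bregman inequality: tangent line of `x ↦ x^p` lies below for `p ≥ 1`. -/
lemma bern1 {p x y : ℝ} (hp : 1 ≤ p) (hx : 0 ≤ x) (hy : 0 < y) :
    y ^ p + p * y ^ (p - 1) * (x - y) ≤ x ^ p := by
  have hs : (-1 : ℝ) ≤ x / y - 1 := by
    have : 0 ≤ x / y := div_nonneg hx hy.le
    linarith
  have h := one_add_mul_self_le_rpow_one_add hs hp
  have h1 : (1 : ℝ) + (x / y - 1) = x / y := by ring
  rw [h1, Real.div_rpow hx hy.le] at h
  have hyp : 0 < y ^ p := Real.rpow_pos_of_pos hy p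
  have hym : y ^ (p - 1) = y ^ p / y := Real.rpow_sub_one hy.ne' p
  have key : (1 + p * (x / y - 1)) * y ^ p ≤ x ^ p := by
    have h2 := mul_le_mul_of_nonneg_right h hyp.le
    rwa [div_mul_cancel₀ _ hyp.ne'] at h2
  have heq : y ^ p + p * y ^ (p - 1) * (x - y) = (1 + p * (x / y - 1)) * y ^ p := by
    rw [hym]; field_simp
  linarith [heq ▸ key]

/-- Reverse Bernoulli: tangent line of `x ↦ x^p` lies above for `0 ≤ p ≤ 1`. -/
lemma bern2 {p x y : ℝ} (hp0 : 0 ≤ p) (hp1 : p ≤ 1) (hx : 0 ≤ x) (hy : 0 < y) :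
    x ^ p ≤ y ^ p + p * y ^ (p - 1) * (x - y) := by
  have hs : (-1 : ℝ) ≤ x / y - 1 := by
    have : 0 ≤ x / y := div_nonneg hx hy.le
    linarith
  have h := rpow_one_add_le_one_add_mul_self hs hp0 hp1
  have h1 : (1 : ℝ) + (x / y - 1) = x / y := by ring
  rw [h1, Real.div_rpow hx hy.le] at h
  have hyp : 0 < y ^ p := Real.rpow_pos_of_pos hy p
  have hym : y ^ (p - 1) = y ^ p / y := Real.rpow_sub_one hy.ne' p
  have key : x ^ p ≤ (1 + p * (x / y - 1)) * y ^ p := by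
    have h2 := mul_le_mul_of_nonneg_right h hyp.le
    rwa [div_mul_cancel₀ _ hyp.ne'] at h2
  have heq : y ^ p + p * y ^ (p - 1) * (x - y) = (1 + p * (x / y - 1)) * y ^ p := by
    rw [hym]; field_simp
  linarith [heq ▸ key]

/-- Bregman nonnegativity for `s ↦ s^γ`, `γ ≥ 1`. -/
lemma breg0 {γ x y : ℝ} (hγ : 1 < γ) (hx : 0 ≤ x) (hy : 0 < y) :
    0 ≤ x ^ γ - y ^ γ - γ * y ^ (γ - 1) * (x - y) := by
  have := bern1 hγ.le hx hy
  linarith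

/-- Strong monotonicity of `u ↦ γ u^(γ-1)` on a compact interval `[c, d] ⊂ (0, ∞)`. -/
lemma strongmono {γ c d u v : ℝ} (hγ : 1 < γ) (hc : 0 < c) (hu : c ≤ u) (huv : u ≤ v)
    (hv : v ≤ d) :
    γ * (γ - 1) * min (c ^ (γ - 2)) (d ^ (γ - 2)) * (v - u) ≤ γ * v ^ (γ - 1) - γ * u ^ (γ - 1) := by
  have hγ0 : (0:ℝ) < γ := by linarith
  have hu0 : 0 < u := hc.trans_le hu
  have hv0 : 0 < v := hu0.trans_le huv
  have hvu : 0 ≤ v - u := by linarith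
  rcases le_total 1 (γ - 1) with hb | hb
  · have h := bern1 hb hv0.le hu0
    have hee : γ - 1 - 1 = γ - 2 := by ring
    have hm : min (c ^ (γ - 2)) (d ^ (γ - 2)) ≤ u ^ (γ - 1 - 1) := by
      rw [hee]
      exact le_trans (min_le_left _ _) (Real.rpow_le_rpow hc.le hu (by linarith))
    have h2 := mul_le_mul_of_nonneg_right hm (mul_nonneg (show (0:ℝ) ≤ γ - 1 by linarith) hvu)
    have h3 := mul_le_mul_of_nonneg_left h hγ0.le
    have h4 := mul_le_mul_of_nonneg_left h2 hγ0.le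
    nlinarith [h3, h4]
  · have h := bern2 (by linarith) hb hu0.le hv0
    have hee : γ - 1 - 1 = γ - 2 := by ring
    have hm : min (c ^ (γ - 2)) (d ^ (γ - 2)) ≤ v ^ (γ - 1 - 1) := by
      rw [hee]
      exact le_trans (min_le_right _ _) (Real.rpow_le_rpow_of_nonpos hv0 hv (by linarith))
    have h2 := mul_le_mul_of_nonneg_right hm (mul_nonneg (show (0:ℝ) ≤ γ - 1 by linarith) hvu)
    have h3 := mul_le_mul_of_nonneg_left h hγ0.le
    have h4 := mul_le_mul_of_nonneg_left h2 hγ0.le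
    nlinarith [h3, h4]

/-- Pointwise coercivity on the large-density set. -/
lemma pkey1 {γ a b M x y : ℝ} (hγ : 1 < γ) (ha : 0 < a) (hM0 : 0 < M)
    (hMc1 : 1 ≤ (1 - (1 + γ) / (2:ℝ) ^ γ) * M)
    (hy : y ∈ Set.Icc a b) (hx : 0 ≤ x) (h2 : 2 * y ≤ x) :
    x ^ γ ≤ M * (x ^ γ - y ^ γ - γ * y ^ (γ - 1) * (x - y)) := by
  have hγp : (0:ℝ) < γ := by linarith
  have hy0 : 0 < y := ha.trans_le hy.1
  have hx0 : 0 < x := by linarith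
  have hm0 : 0 < x / 2 := by linarith
  have h1 := breg0 hγ hm0.le hy0
  have h2' : y ^ (γ - 1) ≤ (x/2) ^ (γ - 1) :=
    Real.rpow_le_rpow hy0.le (by linarith) (by linarith)
  have hprod : 0 ≤ γ * ((x/2) ^ (γ-1) - y ^ (γ-1)) * (x - x/2) :=
    mul_nonneg (mul_nonneg hγp.le (by linarith)) (by linarith)
  have hF : x ^ γ - (x/2) ^ γ - γ * (x/2) ^ (γ-1) * (x - x/2)
      ≤ x ^ γ - y ^ γ - γ * y ^ (γ-1) * (x - y) := by nlinarith [h1, hprod]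
  have e1 : (x/2) ^ γ = x ^ γ / (2:ℝ) ^ γ := Real.div_rpow hx0.le (by norm_num) γ
  have e2 : (x/2) ^ (γ-1) * (x - x/2) = x ^ γ / (2:ℝ) ^ γ := by
    have hxx : x - x/2 = x/2 := by ring
    have hγγ : γ - 1 + 1 = γ := by ring
    rw [hxx, ← Real.rpow_add_one hm0.ne' (γ-1), hγγ, e1]
  have heq : x ^ γ - (x/2) ^ γ - γ * (x/2) ^ (γ-1) * (x - x/2)
      = (1 - (1 + γ) / (2:ℝ) ^ γ) * x ^ γ := by
    rw [e1]
    linear_combination (-γ) * e2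
  have hFc : (1 - (1 + γ) / (2:ℝ) ^ γ) * x ^ γ
      ≤ x ^ γ - y ^ γ - γ * y ^ (γ-1) * (x - y) := by
    rw [← heq]; exact hF
  have hxγ : (0:ℝ) ≤ x ^ γ := Real.rpow_nonneg hx0.le γ
  nlinarith [mul_le_mul_of_nonneg_left hFc hM0.le, mul_le_mul_of_nonneg_right hMc1 hxγ]

/-- Pointwise coercivity on the small-density set. -/
lemma pkey2 {γ a b M x y : ℝ} (hγ : 1 < γ) (ha : 0 < a) (hM0 : 0 < M)
    (hMc2 : 1 ≤ ((1 / (2:ℝ) ^ γ + γ / 2 - 1) * a ^ γ) * M)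
    (hy : y ∈ Set.Icc a b) (hx : 0 ≤ x) (h2 : x ≤ y / 2) :
    1 ≤ M * (x ^ γ - y ^ γ - γ * y ^ (γ - 1) * (x - y)) := by
  have hγp : (0:ℝ) < γ := by linarith
  have hy0 : 0 < y := ha.trans_le hy.1
  have hm0 : 0 < y / 2 := by linarith
  have h1 := breg0 hγ hx hm0
  have h2' : (y/2) ^ (γ - 1) ≤ y ^ (γ - 1) :=
    Real.rpow_le_rpow hm0.le (by linarith) (by linarith)
  have hprod : 0 ≤ γ * (y ^ (γ-1) - (y/2) ^ (γ-1)) * (y/2 - x) :=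
    mul_nonneg (mul_nonneg hγp.le (by linarith)) (by linarith)
  have hF : (y/2) ^ γ - y ^ γ - γ * y ^ (γ-1) * (y/2 - y)
      ≤ x ^ γ - y ^ γ - γ * y ^ (γ-1) * (x - y) := by nlinarith [h1, hprod]
  have e1 : (y/2) ^ γ = y ^ γ / (2:ℝ) ^ γ := Real.div_rpow hy0.le (by norm_num) γ
  have e3 : y ^ (γ-1) * y = y ^ γ := by
    have hγγ : γ - 1 + 1 = γ := by ring
    rw [← Real.rpow_add_one hy0.ne' (γ-1), hγγ]
  have heq : (y/2) ^ γ - y ^ γ - γ * y ^ (γ-1) * (y/2 - y)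
      = (1 / (2:ℝ) ^ γ + γ / 2 - 1) * y ^ γ := by
    rw [e1]
    linear_combination (γ/2) * e3
  have hyγ : a ^ γ ≤ y ^ γ := Real.rpow_le_rpow ha.le hy.1 hγp.le
  have hc2'' : 0 ≤ 1 / (2:ℝ) ^ γ + γ / 2 - 1 := by
    by_contra hneg
    push_neg at hneg
    have haγ : (0:ℝ) < a ^ γ := Real.rpow_pos_of_pos ha γ
    have : (1 / (2:ℝ) ^ γ + γ / 2 - 1) * a ^ γ * M < 0 :=
      mul_neg_of_neg_of_pos (mul_neg_of_neg_of_pos hneg haγ) hM0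
    linarith
  have hc2y : ((1 / (2:ℝ) ^ γ + γ / 2 - 1) * a ^ γ)
      ≤ x ^ γ - y ^ γ - γ * y ^ (γ-1) * (x - y) := by
    have := mul_le_mul_of_nonneg_left hyγ hc2''
    rw [heq] at hF
    linarith
  nlinarith [mul_le_mul_of_nonneg_left hc2y hM0.le, hMc2]

/-- Pointwise coercivity on the intermediate set. -/
lemma pkey3 {γ a b M x y : ℝ} (hγ : 1 < γ) (ha : 0 < a) (hab : a < b) (hM0 : 0 < M)
    (hMK : 1 ≤ (γ * (γ - 1) / 2 * min ((a/2) ^ (γ - 2)) ((2*b) ^ (γ - 2))) * M)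
    (hy : y ∈ Set.Icc a b) (hx1 : y / 2 < x) (hx2 : x < 2 * y) :
    (x - y) ^ 2 ≤ M * (x ^ γ - y ^ γ - γ * y ^ (γ - 1) * (x - y)) := by
  have hy0 : 0 < y := ha.trans_le hy.1
  set K : ℝ := γ * (γ - 1) / 2 * min ((a/2) ^ (γ - 2)) ((2*b) ^ (γ - 2)) with hKdef
  set hfun : ℝ → ℝ :=
    fun t => t ^ γ - y ^ γ - γ * y ^ (γ-1) * (t - y) - K * (t - y) ^ 2 with hfundef
  set φ : ℝ → ℝ :=
    fun t => γ * t ^ (γ-1) - γ * y ^ (γ-1) - K * (2 * (t - y)) with hφdef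
  have hd : ∀ t : ℝ, HasDerivAt hfun (φ t) t := by
    intro t
    have d1 : HasDerivAt (fun t : ℝ => t ^ γ) (γ * t ^ (γ-1)) t :=
      Real.hasDerivAt_rpow_const (Or.inr hγ.le)
    have d2 : HasDerivAt (fun t : ℝ => γ * y ^ (γ-1) * (t - y)) (γ * y ^ (γ-1)) t := by
      simpa using ((hasDerivAt_id t).sub_const y).const_mul (γ * y ^ (γ-1))
    have d3 : HasDerivAt (fun t : ℝ => K * (t - y) ^ 2) (K * (2 * (t - y))) t := by
      have := (((hasDerivAt_id t).sub_const y).pow 2).const_mul K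
      simpa using this
    exact ((d1.sub_const (y ^ γ)).sub d2).sub d3
  have hfy : hfun y = 0 := by simp [hfundef]
  have hmain : 0 ≤ hfun x := by
    rcases lt_trichotomy x y with hxy | hxy | hxy
    · obtain ⟨ξ, hξ, hslope⟩ := exists_hasDerivAt_eq_slope hfun φ hxy
        (fun t _ => (hd t).continuousAt.continuousWithinAt) (fun t _ => hd t)
      have hsm := strongmono hγ (show (0:ℝ) < a/2 by linarith)
        (show a/2 ≤ ξ by have := hξ.1; have := hy.1; linarith)
        (show ξ ≤ y from hξ.2.le)
        (show y ≤ 2*b by have := hy.2; linarith)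
      have hφξ : φ ξ ≤ 0 := by
        rw [hφdef]
        simp only
        rw [hKdef]
        nlinarith [hsm]
      rw [hslope, hfy] at hφξ
      have hpos : 0 < y - x := by linarith
      have := (div_le_iff₀ hpos).mp hφξ
      linarith
    · subst hxy; rw [hfy]
    · obtain ⟨ξ, hξ, hslope⟩ := exists_hasDerivAt_eq_slope hfun φ hxy
        (fun t _ => (hd t).continuousAt.continuousWithinAt) (fun t _ => hd t)
      have hsm := strongmono hγ (show (0:ℝ) < a/2 by linarith)
        (show a/2 ≤ y by have := hy.1; linarith)
        (show y ≤ ξ from hξ.1.le)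
        (show ξ ≤ 2*b by have := hξ.2; have := hy.2; linarith)
      have hφξ : 0 ≤ φ ξ := by
        rw [hφdef]
        simp only
        rw [hKdef]
        nlinarith [hsm]
      rw [hslope, hfy] at hφξ
      have hpos : 0 < x - y := by linarith
      have := (le_div_iff₀ hpos).mp hφξ
      linarith
  have hFK : K * (x - y) ^ 2 ≤ x ^ γ - y ^ γ - γ * y ^ (γ-1) * (x - y) := by
    rw [hfundef] at hmain
    simp only at hmain
    linarith
  have hsq : (0:ℝ) ≤ (x - y) ^ 2 := sq_nonneg _
  nlinarith [mul_le_mul_of_nonneg_left hFK hM0.le, mul_le_mul_of_nonneg_right hMK hsq]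

/-- Choice of a common constant dominating three reciprocals. -/
lemma maxM {c1 c2 c3 : ℝ} (h1 : 0 < c1) (h2 : 0 < c2) (h3 : 0 < c3) :
    ∃ M : ℝ, 0 < M ∧ 1 ≤ c1 * M ∧ 1 ≤ c2 * M ∧ 1 ≤ c3 * M := by
  refine ⟨max c1⁻¹ (max c2⁻¹ c3⁻¹),
    lt_of_lt_of_le (inv_pos.mpr h1) (le_max_left _ _), ?_, ?_, ?_⟩
  · have h := mul_le_mul_of_nonneg_left (le_max_left c1⁻¹ (max c2⁻¹ c3⁻¹)) h1.le
    rwa [mul_inv_cancel₀ h1.ne'] at h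
  · have h := mul_le_mul_of_nonneg_left
      ((le_max_left c2⁻¹ c3⁻¹).trans (le_max_right c1⁻¹ _)) h2.le
    rwa [mul_inv_cancel₀ h2.ne'] at h
  · have h := mul_le_mul_of_nonneg_left
      ((le_max_right c2⁻¹ c3⁻¹).trans (le_max_right c1⁻¹ _)) h3.le
    rwa [mul_inv_cancel₀ h3.ne'] at h

/-- Generic integration step. -/
lemma int_step {X : Type*} [MeasurableSpace X] (μ : Measure X) {S : Set X}
    (f g : X → ℝ) (hg : Measurable g) {C : ℝ} (hC : 0 ≤ C)
    (h : ∀ x ∈ S, f x ≤ C * g x) :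
    ∫⁻ x in S, ENNReal.ofReal (f x) ∂μ ≤ ENNReal.ofReal C * ∫⁻ x, ENNReal.ofReal (g x) ∂μ := by
  calc ∫⁻ x in S, ENNReal.ofReal (f x) ∂μ
      ≤ ∫⁻ x in S, ENNReal.ofReal C * ENNReal.ofReal (g x) ∂μ := by
        refine setLIntegral_mono (measurable_const.mul hg.ennreal_ofReal) fun x hx => ?_
        rw [← ENNReal.ofReal_mul hC]
        exact ENNReal.ofReal_le_ofReal (h x hx)
    _ ≤ ∫⁻ x, ENNReal.ofReal C * ENNReal.ofReal (g x) ∂μ := setLIntegral_le_lintegral _ _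
    _ = ENNReal.ofReal C * ∫⁻ x, ENNReal.ofReal (g x) ∂μ :=
        lintegral_const_mul' _ _ ENNReal.ofReal_ne_top

/-- Integral coercivity bounds (3.14) of the paper on a finite measure space. -/
theorem stmt_6 (γ a b : ℝ) (hγ : 1 < γ) (ha : 0 < a) (hab : a < b)
    {X : Type*} [MeasurableSpace X] (μ : Measure X) [IsFiniteMeasure μ] :
    ∃ C > 0, ∀ ρ r : X → ℝ, Measurable ρ → Measurable r →
      (∀ x, 0 ≤ ρ x) → (∀ x, r x ∈ Set.Icc a b) →
      (∫⁻ x in {x | 2 * r x ≤ ρ x}, ENNReal.ofReal ((ρ x) ^ γ) ∂μ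
          ≤ ENNReal.ofReal C * ∫⁻ x, ENNReal.ofReal (relE γ (ρ x) (r x)) ∂μ) ∧
      (μ {x | ρ x ≤ r x / 2}
          ≤ ENNReal.ofReal C * ∫⁻ x, ENNReal.ofReal (relE γ (ρ x) (r x)) ∂μ) ∧
      (∫⁻ x in {x | r x / 2 < ρ x ∧ ρ x < 2 * r x}, ENNReal.ofReal ((ρ x - r x) ^ 2) ∂μ
          ≤ ENNReal.ofReal C * ∫⁻ x, ENNReal.ofReal (relE γ (ρ x) (r x)) ∂μ) := by
  have hγ0 : (0:ℝ) < γ - 1 := by linarith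
  have hγp : (0:ℝ) < γ := by linarith
  have hb : (0:ℝ) < b := ha.trans hab
  have hL1 : (1:ℝ)/2 < Real.log 2 := by linarith [Real.log_two_gt_d9]
  have hL2 : Real.log 2 < 1 := by linarith [Real.log_two_lt_d9]
  have h2γ : (0:ℝ) < (2:ℝ) ^ γ := Real.rpow_pos_of_pos two_pos γ
  have hexp2 : Real.exp (Real.log 2) = 2 := Real.exp_log two_pos
  have hexpγ : (2:ℝ) ^ γ = Real.exp (Real.log 2 * γ) := Real.rpow_def_of_pos two_pos γ
  have hc1 : 0 < 1 - (1 + γ) / (2:ℝ) ^ γ := by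
    have hsplit : Real.exp (Real.log 2 * γ)
        = Real.exp (Real.log 2) * Real.exp (Real.log 2 * (γ - 1)) := by
      rw [← Real.exp_add]; congr 1; ring
    have he1 : 1 + Real.log 2 * (γ - 1) ≤ Real.exp (Real.log 2 * (γ - 1)) := by
      linarith [Real.add_one_le_exp (Real.log 2 * (γ - 1))]
    have hgt : 1 + γ < (2:ℝ) ^ γ := by
      rw [hexpγ, hsplit, hexp2]; nlinarith
    rw [sub_pos, div_lt_one h2γ]; exact hgt
  have hc2' : 0 < 1 / (2:ℝ) ^ γ + γ / 2 - 1 := by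
    have hinv : 1 / (2:ℝ) ^ γ
        = Real.exp (-(Real.log 2)) * Real.exp (-(Real.log 2 * (γ - 1))) := by
      rw [hexpγ, ← Real.exp_add, one_div, ← Real.exp_neg]; congr 1; ring
    have he1 : 1 + -(Real.log 2 * (γ - 1)) ≤ Real.exp (-(Real.log 2 * (γ - 1))) := by
      linarith [Real.add_one_le_exp (-(Real.log 2 * (γ - 1)))]
    have hne : Real.exp (-(Real.log 2)) = 1/2 := by rw [Real.exp_neg, hexp2]; norm_num
    rw [hinv, hne]
    nlinarith
  have haγ : (0:ℝ) < a ^ γ := Real.rpow_pos_of_pos ha γ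
  have hc2 : 0 < (1 / (2:ℝ) ^ γ + γ / 2 - 1) * a ^ γ := mul_pos hc2' haγ
  have hK0 : 0 < min ((a/2) ^ (γ - 2)) ((2*b) ^ (γ - 2)) :=
    lt_min (Real.rpow_pos_of_pos (by linarith) _) (Real.rpow_pos_of_pos (by linarith) _)
  have hK : 0 < γ * (γ - 1) / 2 * min ((a/2) ^ (γ - 2)) ((2*b) ^ (γ - 2)) := by positivity
  obtain ⟨M, hM0, hMc1, hMc2, hMK⟩ :
      ∃ M : ℝ, 0 < M ∧ 1 ≤ (1 - (1 + γ) / (2:ℝ) ^ γ) * M ∧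
        1 ≤ ((1 / (2:ℝ) ^ γ + γ / 2 - 1) * a ^ γ) * M ∧
        1 ≤ (γ * (γ - 1) / 2 * min ((a/2) ^ (γ - 2)) ((2*b) ^ (γ - 2))) * M :=
    maxM hc1 hc2 hK
  have relE_eq : ∀ x y : ℝ,
      relE γ x y = (x ^ γ - y ^ γ - γ * y ^ (γ - 1) * (x - y)) / (γ - 1) := by
    intro x y
    have h1 : HasDerivAt (fun s : ℝ => s ^ γ - s) (γ * y ^ (γ - 1) - 1) y :=
      (Real.hasDerivAt_rpow_const (Or.inr hγ.le)).sub (hasDerivAt_id y)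
    have hd : HasDerivAt (Ppot γ) ((γ * y ^ (γ - 1) - 1) / (γ - 1)) y := h1.div_const _
    rw [relE, hd.deriv]
    simp only [Ppot]
    field_simp
    ring
  refine ⟨(γ - 1) * M, by positivity, ?_⟩
  intro ρ r hρ hr hρ0 hrab
  have hCnn : (0:ℝ) ≤ (γ - 1) * M := by positivity
  have hgmeas : Measurable (fun x => relE γ (ρ x) (r x)) := by
    have heq : (fun x => relE γ (ρ x) (r x)) =
        fun x => (ρ x ^ γ - r x ^ γ - γ * r x ^ (γ - 1) * (ρ x - r x)) / (γ - 1) :=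
      funext fun x => relE_eq _ _
    rw [heq]
    have hm1 : Measurable fun x => ρ x ^ γ :=
      (Real.continuous_rpow_const hγp.le).measurable.comp hρ
    have hm2 : Measurable fun x => r x ^ γ :=
      (Real.continuous_rpow_const hγp.le).measurable.comp hr
    have hm3 : Measurable fun x => r x ^ (γ - 1) :=
      (Real.continuous_rpow_const (by linarith)).measurable.comp hr
    exact ((hm1.sub hm2).sub ((measurable_const.mul hm3).mul (hρ.sub hr))).div_const _
  have hCeq : ∀ x : X, ((γ - 1) * M) * relE γ (ρ x) (r x)
      = M * (ρ x ^ γ - r x ^ γ - γ * r x ^ (γ - 1) * (ρ x - r x)) := by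
    intro x
    rw [relE_eq]
    field_simp
  refine ⟨?_, ?_, ?_⟩
  · refine int_step μ _ _ hgmeas hCnn fun x hx => ?_
    rw [hCeq x]
    exact pkey1 hγ ha hM0 hMc1 (hrab x) (hρ0 x) hx
  · calc μ {x | ρ x ≤ r x / 2} = ∫⁻ _ in {x | ρ x ≤ r x / 2}, 1 ∂μ :=
          (setLIntegral_one _).symm
      _ = ∫⁻ x in {x | ρ x ≤ r x / 2}, ENNReal.ofReal ((fun _ => (1:ℝ)) x) ∂μ := by
          simp
      _ ≤ _ := by
          refine int_step μ _ _ hgmeas hCnn fun x hx => ?_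
          rw [hCeq x]
          exact pkey2 hγ ha hM0 hMc2 (hrab x) (hρ0 x) hx
  · refine int_step μ _ _ hgmeas hCnn fun x hx => ?_
    rw [hCeq x]
    exact pkey3 hγ ha hab hM0 hMK (hrab x) hx.1 hx.2
end

section
/- Let γ > 1 and fix a time t. Let r : ℝ² × ℝ → (0,∞), V : ℝ³ × ℝ → ℝ² and W : ℝ³ × ℝ → ℝ be C¹ functions, 1-periodic in the horizontal variables x = (x₁,x₂), with V and W 2-periodic in the vertical variable z and r independent of z, satisfying the continuity equation ∂ₜr + div_x(rV) + r ∂_z W = 0 pointwise. Let ρ : ℝ² → [0,∞) be continuous and 1-periodic in x (independent of z), and let v : ℝ³ → ℝ² be continuous, 1-periodic in x and 2-periodic in z. Then − ∫_Ω [ (ρ/r)(V − v)·∇_x p(r) + P''(r)((ρ − r)∂ₜr + ρ v·∇_x r) + p(ρ) div_x V ] dx dz = − ∫_Ω div_x V · ( p(ρ) − p'(r)(ρ − r) − p(r) ) dx dz, where all functions of (x,z) are evaluated at time t. -/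
open MeasureTheory

/-- Partial derivative in the first horizontal variable `x₁`. -/
noncomputable def d1 (f : ℝ → ℝ → ℝ → ℝ → ℝ) (x₁ x₂ z t : ℝ) : ℝ :=
  deriv (fun y => f y x₂ z t) x₁

/-- Partial derivative in the second horizontal variable `x₂`. -/
noncomputable def d2 (f : ℝ → ℝ → ℝ → ℝ → ℝ) (x₁ x₂ z t : ℝ) : ℝ :=
  deriv (fun y => f x₁ y z t) x₂

/-! Eliminating `∂ₜr` with the continuity equation turns the integrand, pointwise, into
`div_x V · (p(ρ) − p'(r)(ρ − r) − p(r)) + ∂₁(p(r)V₁) + ∂₂(p(r)V₂) − p'(r)(ρ − r) ∂_z W`.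
Each of the last three terms is the derivative, in one variable, of a function periodic in that
variable (`p'(r)(ρ − r)` does not depend on `z`), so after Fubini the fundamental theorem of
calculus makes its integral over `Ω` vanish. -/

open Topology

lemma deriv_deriv_Ppot {γ s : ℝ} (hγ : γ ≠ 1) (hs : 0 < s) :
    deriv (deriv (Ppot γ)) s = γ * s ^ (γ - 2) := by
  have h1 : ∀ x, 0 < x → HasDerivAt (Ppot γ) ((γ * x ^ (γ - 1) - 1) / (γ - 1)) x := fun x hx =>
    ((Real.hasDerivAt_rpow_const (Or.inl hx.ne')).sub (hasDerivAt_id x)).div_const (γ - 1)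
  have h2 : deriv (Ppot γ) =ᶠ[𝓝 s] fun x => (γ * x ^ (γ - 1) - 1) / (γ - 1) :=
    (eventually_gt_nhds hs).mono fun x hx => (h1 x hx).deriv
  rw [h2.deriv_eq, ((((Real.hasDerivAt_rpow_const (p := γ - 1) (Or.inl hs.ne')).const_mul
    γ).sub_const 1).div_const (γ - 1)).deriv]
  field_simp [sub_ne_zero.2 hγ]
  ring_nf

section PartialDeriv

variable {F : ℝ → ℝ → ℝ → ℝ}

lemma hasDerivAt_slice_fst {a b c : ℝ}
    (hF : DifferentiableAt ℝ (fun q : ℝ × ℝ × ℝ => F q.1 q.2.1 q.2.2) (a, b, c)) :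
    HasDerivAt (fun y => F y b c)
      (fderiv ℝ (fun q : ℝ × ℝ × ℝ => F q.1 q.2.1 q.2.2) (a, b, c) (1, 0, 0)) a := by
  exact hF.hasFDerivAt.comp_hasDerivAt a
    ((hasDerivAt_id a).prodMk ((hasDerivAt_const a b).prodMk (hasDerivAt_const a c)))

lemma hasDerivAt_slice_snd {a b c : ℝ}
    (hF : DifferentiableAt ℝ (fun q : ℝ × ℝ × ℝ => F q.1 q.2.1 q.2.2) (a, b, c)) :
    HasDerivAt (fun y => F a y c)
      (fderiv ℝ (fun q : ℝ × ℝ × ℝ => F q.1 q.2.1 q.2.2) (a, b, c) (0, 1, 0)) b := by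
  exact hF.hasFDerivAt.comp_hasDerivAt b
    ((hasDerivAt_const b a).prodMk ((hasDerivAt_id b).prodMk (hasDerivAt_const b c)))

lemma hasDerivAt_slice_thd {a b c : ℝ}
    (hF : DifferentiableAt ℝ (fun q : ℝ × ℝ × ℝ => F q.1 q.2.1 q.2.2) (a, b, c)) :
    HasDerivAt (fun y => F a b y)
      (fderiv ℝ (fun q : ℝ × ℝ × ℝ => F q.1 q.2.1 q.2.2) (a, b, c) (0, 0, 1)) c := by
  exact hF.hasFDerivAt.comp_hasDerivAt c
    ((hasDerivAt_const c a).prodMk ((hasDerivAt_const c b).prodMk (hasDerivAt_id c)))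

lemma continuous_deriv_slice_fst (hF : ContDiff ℝ 1 fun q : ℝ × ℝ × ℝ => F q.1 q.2.1 q.2.2) :
    Continuous fun q : ℝ × ℝ × ℝ => deriv (fun y => F y q.2.1 q.2.2) q.1 := by
  simp_rw [fun a b c => (hasDerivAt_slice_fst (hF.differentiable one_ne_zero (a, b, c))).deriv]
  exact (hF.continuous_fderiv one_ne_zero).clm_apply continuous_const

lemma continuous_deriv_slice_snd (hF : ContDiff ℝ 1 fun q : ℝ × ℝ × ℝ => F q.1 q.2.1 q.2.2) :
    Continuous fun q : ℝ × ℝ × ℝ => deriv (fun y => F q.1 y q.2.2) q.2.1 := by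
  simp_rw [fun a b c => (hasDerivAt_slice_snd (hF.differentiable one_ne_zero (a, b, c))).deriv]
  exact (hF.continuous_fderiv one_ne_zero).clm_apply continuous_const

lemma continuous_deriv_slice_thd (hF : ContDiff ℝ 1 fun q : ℝ × ℝ × ℝ => F q.1 q.2.1 q.2.2) :
    Continuous fun q : ℝ × ℝ × ℝ => deriv (fun y => F q.1 q.2.1 y) q.2.2 := by
  simp_rw [fun a b c => (hasDerivAt_slice_thd (hF.differentiable one_ne_zero (a, b, c))).deriv]
  exact (hF.continuous_fderiv one_ne_zero).clm_apply continuous_const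

end PartialDeriv

lemma intervalIntegral_intervalIntegral_swap_of_continuous {F : ℝ → ℝ → ℝ}
    (hF : Continuous fun p : ℝ × ℝ => F p.1 p.2) (a b c d : ℝ) :
    ∫ x in a..b, ∫ y in c..d, F x y = ∫ y in c..d, ∫ x in a..b, F x y :=
  intervalIntegral_intervalIntegral_swap <|
    (hF.continuousOn.integrableOn_compact (isCompact_uIcc.prod isCompact_uIcc)).mono_set
      (Set.prod_mono Set.uIoc_subset_uIcc Set.uIoc_subset_uIcc)

section IteratedIntegral

variable {a₀ a₁ b₀ b₁ c₀ c₁ : ℝ} {F G : ℝ → ℝ → ℝ → ℝ}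

lemma continuous_intervalIntegral_thd (hF : Continuous fun q : ℝ × ℝ × ℝ => F q.1 q.2.1 q.2.2) :
    Continuous fun p : ℝ × ℝ => ∫ c in c₀..c₁, F p.1 p.2 c :=
  intervalIntegral.continuous_parametric_intervalIntegral_of_continuous'
    (μ := volume) (f := fun (p : ℝ × ℝ) c => F p.1 p.2 c)
    (hF.comp (f := fun x : (ℝ × ℝ) × ℝ => (x.1.1, x.1.2, x.2)) (by fun_prop)) c₀ c₁

lemma integral3_add (hF : Continuous fun q : ℝ × ℝ × ℝ => F q.1 q.2.1 q.2.2)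
    (hG : Continuous fun q : ℝ × ℝ × ℝ => G q.1 q.2.1 q.2.2) :
    ∫ a in a₀..a₁, ∫ b in b₀..b₁, ∫ c in c₀..c₁, (F a b c + G a b c)
      = (∫ a in a₀..a₁, ∫ b in b₀..b₁, ∫ c in c₀..c₁, F a b c)
        + ∫ a in a₀..a₁, ∫ b in b₀..b₁, ∫ c in c₀..c₁, G a b c := by
  have hFc := continuous_intervalIntegral_thd (c₀ := c₀) (c₁ := c₁) hF
  have hGc := continuous_intervalIntegral_thd (c₀ := c₀) (c₁ := c₁) hG
  have hFb := intervalIntegral.continuous_parametric_intervalIntegral_of_continuous'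
    (μ := volume) (f := fun a b => ∫ c in c₀..c₁, F a b c) hFc b₀ b₁
  have hGb := intervalIntegral.continuous_parametric_intervalIntegral_of_continuous'
    (μ := volume) (f := fun a b => ∫ c in c₀..c₁, G a b c) hGc b₀ b₁
  have hc : ∀ a b, ∫ c in c₀..c₁, (F a b c + G a b c)
      = (∫ c in c₀..c₁, F a b c) + ∫ c in c₀..c₁, G a b c := fun a b =>
    intervalIntegral.integral_add
      ((hF.comp (f := fun c : ℝ => (a, b, c)) (by fun_prop)).intervalIntegrable _ _)
      ((hG.comp (f := fun c : ℝ => (a, b, c)) (by fun_prop)).intervalIntegrable _ _)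
  have hb : ∀ a, ∫ b in b₀..b₁, ((∫ c in c₀..c₁, F a b c) + ∫ c in c₀..c₁, G a b c)
      = (∫ b in b₀..b₁, ∫ c in c₀..c₁, F a b c) + ∫ b in b₀..b₁, ∫ c in c₀..c₁, G a b c :=
    fun a => intervalIntegral.integral_add
      ((hFc.comp (f := fun b : ℝ => (a, b)) (by fun_prop)).intervalIntegrable _ _)
      ((hGc.comp (f := fun b : ℝ => (a, b)) (by fun_prop)).intervalIntegrable _ _)
  simp only [hc, hb]
  exact intervalIntegral.integral_add (hFb.intervalIntegrable _ _) (hGb.intervalIntegrable _ _)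

lemma integral3_deriv_fst_eq_zero (hF : ContDiff ℝ 1 fun q : ℝ × ℝ × ℝ => F q.1 q.2.1 q.2.2)
    (hper : ∀ b c, F a₁ b c = F a₀ b c) :
    ∫ a in a₀..a₁, ∫ b in b₀..b₁, ∫ c in c₀..c₁, deriv (fun y => F y b c) a = 0 := by
  have hF' := continuous_deriv_slice_fst hF
  have hFTC : ∀ b c, ∫ a in a₀..a₁, deriv (fun y => F y b c) a = 0 := fun b c => by
    rw [intervalIntegral.integral_deriv_eq_sub
      (fun x _ => (hasDerivAt_slice_fst (hF.differentiable one_ne_zero (x, b, c))).differentiableAt)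
      ((hF'.comp (f := fun a : ℝ => (a, b, c)) (by fun_prop)).intervalIntegrable _ _),
      hper, sub_self]
  have hac : ∀ b, ∫ a in a₀..a₁, ∫ c in c₀..c₁, deriv (fun y => F y b c) a = 0 := fun b => by
    rw [intervalIntegral_intervalIntegral_swap_of_continuous
      (F := fun a c => deriv (fun y => F y b c) a)
      (hF'.comp (f := fun p : ℝ × ℝ => (p.1, b, p.2)) (by fun_prop))]
    simp only [hFTC, intervalIntegral.integral_zero]
  rw [intervalIntegral_intervalIntegral_swap_of_continuous
    (F := fun a b => ∫ c in c₀..c₁, deriv (fun y => F y b c) a)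
    (continuous_intervalIntegral_thd (F := fun a b c => deriv (fun y => F y b c) a) hF')]
  simp only [hac, intervalIntegral.integral_zero]

lemma integral3_deriv_snd_eq_zero (hF : ContDiff ℝ 1 fun q : ℝ × ℝ × ℝ => F q.1 q.2.1 q.2.2)
    (hper : ∀ a c, F a b₁ c = F a b₀ c) :
    ∫ a in a₀..a₁, ∫ b in b₀..b₁, ∫ c in c₀..c₁, deriv (fun y => F a y c) b = 0 := by
  have hF' := continuous_deriv_slice_snd hF
  have hFTC : ∀ a c, ∫ b in b₀..b₁, deriv (fun y => F a y c) b = 0 := fun a c => by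
    rw [intervalIntegral.integral_deriv_eq_sub
      (fun x _ => (hasDerivAt_slice_snd (hF.differentiable one_ne_zero (a, x, c))).differentiableAt)
      ((hF'.comp (f := fun b : ℝ => (a, b, c)) (by fun_prop)).intervalIntegrable _ _),
      hper, sub_self]
  have hbc : ∀ a, ∫ b in b₀..b₁, ∫ c in c₀..c₁, deriv (fun y => F a y c) b = 0 := fun a => by
    rw [intervalIntegral_intervalIntegral_swap_of_continuous
      (F := fun b c => deriv (fun y => F a y c) b)
      (hF'.comp (f := fun p : ℝ × ℝ => (a, p.1, p.2)) (by fun_prop))]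
    simp only [hFTC, intervalIntegral.integral_zero]
  simp only [hbc, intervalIntegral.integral_zero]

lemma integral3_mul_deriv_thd_eq_zero (g : ℝ → ℝ → ℝ)
    (hF : ContDiff ℝ 1 fun q : ℝ × ℝ × ℝ => F q.1 q.2.1 q.2.2)
    (hper : ∀ a b, F a b c₁ = F a b c₀) :
    ∫ a in a₀..a₁, ∫ b in b₀..b₁, ∫ c in c₀..c₁, g a b * deriv (fun y => F a b y) c = 0 := by
  have hFTC : ∀ a b, ∫ c in c₀..c₁, deriv (fun y => F a b y) c = 0 := fun a b => by
    rw [intervalIntegral.integral_deriv_eq_sub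
      (fun x _ => (hasDerivAt_slice_thd (hF.differentiable one_ne_zero (a, b, x))).differentiableAt)
      (((continuous_deriv_slice_thd hF).comp (f := fun c : ℝ => (a, b, c))
        (by fun_prop)).intervalIntegrable _ _),
      hper, sub_self]
  simp only [intervalIntegral.integral_const_mul, hFTC, mul_zero, intervalIntegral.integral_zero]

lemma integral3_add_periodic_divergence {R W : ℝ → ℝ → ℝ → ℝ} {g : ℝ → ℝ → ℝ}
    (hR : Continuous fun q : ℝ × ℝ × ℝ => R q.1 q.2.1 q.2.2)
    (hF : ContDiff ℝ 1 fun q : ℝ × ℝ × ℝ => F q.1 q.2.1 q.2.2) (hFper : ∀ b c, F a₁ b c = F a₀ b c)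
    (hG : ContDiff ℝ 1 fun q : ℝ × ℝ × ℝ => G q.1 q.2.1 q.2.2) (hGper : ∀ a c, G a b₁ c = G a b₀ c)
    (hg : Continuous fun p : ℝ × ℝ => g p.1 p.2)
    (hW : ContDiff ℝ 1 fun q : ℝ × ℝ × ℝ => W q.1 q.2.1 q.2.2)
    (hWper : ∀ a b, W a b c₁ = W a b c₀) :
    ∫ a in a₀..a₁, ∫ b in b₀..b₁, ∫ c in c₀..c₁,
        (R a b c + (deriv (fun y => F y b c) a + deriv (fun y => G a y c) b
          + g a b * deriv (fun y => W a b y) c))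
      = ∫ a in a₀..a₁, ∫ b in b₀..b₁, ∫ c in c₀..c₁, R a b c := by
  have hF' := continuous_deriv_slice_fst hF
  have hG' := continuous_deriv_slice_snd hG
  have hgW' : Continuous fun q : ℝ × ℝ × ℝ => g q.1 q.2.1 * deriv (fun y => W q.1 q.2.1 y) q.2.2 :=
    (hg.comp (f := fun q : ℝ × ℝ × ℝ => (q.1, q.2.1)) (by fun_prop)).mul
      (continuous_deriv_slice_thd hW)
  rw [integral3_add hR ((hF'.add hG').add hgW'), integral3_add (hF'.add hG') hgW',
    integral3_add hF' hG', integral3_deriv_fst_eq_zero hF hFper,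
    integral3_deriv_snd_eq_zero hG hGper, integral3_mul_deriv_thd_eq_zero g hW hWper]
  ring

end IteratedIntegral

lemma contDiff_slice_last {n : WithTop ℕ∞} {f : ℝ → ℝ → ℝ → ℝ → ℝ}
    (hf : ContDiff ℝ n fun q : ℝ × ℝ × ℝ × ℝ => f q.1 q.2.1 q.2.2.1 q.2.2.2) (t : ℝ) :
    ContDiff ℝ n fun q : ℝ × ℝ × ℝ => f q.1 q.2.1 q.2.2 t :=
  hf.comp (f := fun q : ℝ × ℝ × ℝ => (q.1, q.2.1, q.2.2, t)) (by fun_prop)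

lemma pressure_terms_algebra {γ R ρ w1 w2 V1 V2 Ra Rb Rt dV1 dV2 Wc : ℝ} (hR : 0 < R)
    (hcont : Rt + (Ra * V1 + R * dV1) + (Rb * V2 + R * dV2) + R * Wc = 0) :
    ρ / R * ((V1 - w1) * (Ra * γ * R ^ (γ - 1)) + (V2 - w2) * (Rb * γ * R ^ (γ - 1)))
        + γ * R ^ (γ - 2) * ((ρ - R) * Rt + ρ * (w1 * Ra + w2 * Rb)) + ρ ^ γ * (dV1 + dV2)
      = (dV1 + dV2) * (ρ ^ γ - γ * R ^ (γ - 1) * (ρ - R) - R ^ γ)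
        + ((Ra * γ * R ^ (γ - 1) * V1 + R ^ γ * dV1) + (Rb * γ * R ^ (γ - 1) * V2 + R ^ γ * dV2)
          + -(γ * R ^ (γ - 1) * (ρ - R)) * Wc) := by
  have e1 : R ^ (γ - 1) = R ^ (γ - 2) * R := by
    rw [← Real.rpow_add_one hR.ne']; ring_nf
  have e2 : R ^ γ = R ^ (γ - 2) * R * R := by
    rw [← e1, ← Real.rpow_add_one hR.ne']; ring_nf
  rw [e1, e2]
  field_simp
  linear_combination (γ * R ^ (γ - 2) * (ρ - R)) * hcont

lemma pressure_integrand_eq {γ : ℝ} (hγ : γ ≠ 1) {r : ℝ → ℝ → ℝ → ℝ}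
    {V1 V2 W : ℝ → ℝ → ℝ → ℝ → ℝ} {a b c t : ℝ} (ρ w1 w2 : ℝ) (hr : 0 < r a b t)
    (hra : DifferentiableAt ℝ (fun y => r y b t) a) (hrb : DifferentiableAt ℝ (fun y => r a y t) b)
    (hV1 : DifferentiableAt ℝ (fun y => V1 y b c t) a)
    (hV2 : DifferentiableAt ℝ (fun y => V2 a y c t) b)
    (hcont : deriv (fun y => r a b y) t + deriv (fun y => r y b t * V1 y b c t) a
      + deriv (fun y => r a y t * V2 a y c t) b + r a b t * deriv (fun y => W a b y t) c = 0) :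
    ρ / r a b t * ((V1 a b c t - w1) * deriv (fun y => (r y b t) ^ γ) a
          + (V2 a b c t - w2) * deriv (fun y => (r a y t) ^ γ) b)
        + deriv (deriv (Ppot γ)) (r a b t) * ((ρ - r a b t) * deriv (fun y => r a b y) t
          + ρ * (w1 * deriv (fun y => r y b t) a + w2 * deriv (fun y => r a y t) b))
        + ρ ^ γ * (d1 V1 a b c t + d2 V2 a b c t)
      = (d1 V1 a b c t + d2 V2 a b c t)
          * (ρ ^ γ - deriv (fun s : ℝ => s ^ γ) (r a b t) * (ρ - r a b t) - r a b t ^ γ)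
        + (deriv (fun y => r y b t ^ γ * V1 y b c t) a + deriv (fun y => r a y t ^ γ * V2 a y c t) b
          + -(γ * r a b t ^ (γ - 1) * (ρ - r a b t)) * deriv (fun y => W a b y t) c) := by
  have hpa := hra.hasDerivAt.rpow_const (p := γ) (Or.inl hr.ne')
  have hpb := hrb.hasDerivAt.rpow_const (p := γ) (Or.inl hr.ne')
  rw [deriv_fun_mul hra hV1, deriv_fun_mul hrb hV2] at hcont
  rw [hpa.deriv, hpb.deriv, (hpa.fun_mul hV1.hasDerivAt).deriv, (hpb.fun_mul hV2.hasDerivAt).deriv,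
    deriv_deriv_Ppot hγ hr, Real.deriv_rpow_const]
  exact pressure_terms_algebra hr hcont

theorem stmt_12_general (γ : ℝ) (hγ : 1 < γ) (t : ℝ)
    (r : ℝ → ℝ → ℝ → ℝ) (V1 V2 W : ℝ → ℝ → ℝ → ℝ → ℝ)
    (ρ : ℝ → ℝ → ℝ) (v1 v2 : ℝ → ℝ → ℝ → ℝ)
    (hrpos : ∀ x₁ x₂ s, 0 < r x₁ x₂ s)
    (hrC1 : ContDiff ℝ 1 (fun q : ℝ × ℝ × ℝ => r q.1 q.2.1 q.2.2))
    (hV1C1 : ContDiff ℝ 1 (fun q : ℝ × ℝ × ℝ × ℝ => V1 q.1 q.2.1 q.2.2.1 q.2.2.2))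
    (hV2C1 : ContDiff ℝ 1 (fun q : ℝ × ℝ × ℝ × ℝ => V2 q.1 q.2.1 q.2.2.1 q.2.2.2))
    (hWC1 : ContDiff ℝ 1 (fun q : ℝ × ℝ × ℝ × ℝ => W q.1 q.2.1 q.2.2.1 q.2.2.2))
    (hrper : ∀ x₁ x₂ s, r (x₁ + 1) x₂ s = r x₁ x₂ s ∧ r x₁ (x₂ + 1) s = r x₁ x₂ s)
    (hVWper : ∀ f ∈ [V1, V2, W], ∀ x₁ x₂ z s : ℝ,
      f (x₁ + 1) x₂ z s = f x₁ x₂ z s ∧ f x₁ (x₂ + 1) z s = f x₁ x₂ z s ∧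
      f x₁ x₂ (z + 2) s = f x₁ x₂ z s)
    (hρcont : Continuous (fun q : ℝ × ℝ => ρ q.1 q.2))
    -- the continuity equation for (r, V, W)
    (hcont : ∀ x₁ x₂ z s : ℝ,
      deriv (fun y => r x₁ x₂ y) s
        + deriv (fun y => r y x₂ s * V1 y x₂ z s) x₁
        + deriv (fun y => r x₁ y s * V2 x₁ y z s) x₂
        + r x₁ x₂ s * deriv (fun y => W x₁ x₂ y s) z = 0) :
    -(∫ a in (0:ℝ)..1, ∫ b in (0:ℝ)..1, ∫ c in (-1:ℝ)..1,
        (ρ a b / r a b t *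
            ((V1 a b c t - v1 a b c) * deriv (fun y => (r y b t) ^ γ) a
              + (V2 a b c t - v2 a b c) * deriv (fun y => (r a y t) ^ γ) b)
          + deriv (deriv (Ppot γ)) (r a b t) *
            ((ρ a b - r a b t) * deriv (fun y => r a b y) t
              + ρ a b * (v1 a b c * deriv (fun y => r y b t) a
                + v2 a b c * deriv (fun y => r a y t) b))
          + (ρ a b) ^ γ * (d1 V1 a b c t + d2 V2 a b c t)))
    = -(∫ a in (0:ℝ)..1, ∫ b in (0:ℝ)..1, ∫ c in (-1:ℝ)..1,
        (d1 V1 a b c t + d2 V2 a b c t) *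
          ((ρ a b) ^ γ - deriv (fun s : ℝ => s ^ γ) (r a b t) * (ρ a b - r a b t)
            - (r a b t) ^ γ)) := by
  have hr := hrC1.differentiable one_ne_zero
  have hrt : ContDiff ℝ 1 fun q : ℝ × ℝ × ℝ => r q.1 q.2.1 t :=
    hrC1.comp (f := fun q : ℝ × ℝ × ℝ => (q.1, q.2.1, t)) (by fun_prop)
  have hrγt := hrt.rpow_const_of_ne (p := γ) fun q => (hrpos _ _ _).ne'
  have hV1t := contDiff_slice_last hV1C1 t
  have hV2t := contDiff_slice_last hV2C1 t
  simp only [fun a b c => pressure_integrand_eq hγ.ne' (ρ a b) (v1 a b c) (v2 a b c) (hrpos a b t)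
    (hasDerivAt_slice_fst (hr (a, b, t))).differentiableAt
    (hasDerivAt_slice_snd (hr (a, b, t))).differentiableAt
    (hasDerivAt_slice_fst (F := fun a b c => V1 a b c t)
      (hV1t.differentiable one_ne_zero (a, b, c))).differentiableAt
    (hasDerivAt_slice_snd (F := fun a b c => V2 a b c t)
      (hV2t.differentiable one_ne_zero (a, b, c))).differentiableAt
    (hcont a b c t)]
  congr 1
  refine integral3_add_periodic_divergence ?_ (hrγt.mul hV1t) ?_ (hrγt.mul hV2t) ?_ ?_
    (contDiff_slice_last hWC1 t) ?_
  · have := continuous_deriv_slice_fst (F := fun a b c => V1 a b c t) hV1t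
    have := continuous_deriv_slice_snd (F := fun a b c => V2 a b c t) hV2t
    have := hrt.continuous
    simp only [d1, d2, Real.deriv_rpow_const]
    fun_prop (disch := linarith)
  · intro b c
    simpa using congrArg₂ (· ^ γ * ·) (hrper 0 b t).1 (hVWper V1 (by simp) 0 b c t).1
  · intro a c
    simpa using congrArg₂ (· ^ γ * ·) (hrper a 0 t).2 (hVWper V2 (by simp) a 0 c t).2.1
  · have : Continuous fun p : ℝ × ℝ => r p.1 p.2 t :=
      hrC1.continuous.comp (f := fun p : ℝ × ℝ => (p.1, p.2, t)) (by fun_prop)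
    fun_prop (disch := linarith)
  · intro a b
    simpa [show (-1 : ℝ) + 2 = 1 by norm_num] using (hVWper W (by simp) a b (-1) t).2.2

/-- Identity (4.13)–(4.15) of Step 3 of the paper: the pressure terms of the relative
entropy inequality reduce to the relative pressure excess tested against `div_x V`.
Here `r = r(x₁,x₂,t) > 0` is z-independent, `(V,W) = (V1,V2,W)(x₁,x₂,z,t)` satisfy the
continuity equation `∂ₜr + div_x(rV) + r∂_zW = 0`, `ρ = ρ(x₁,x₂) ≥ 0` is z-independent
and `v = (v1,v2)(x₁,x₂,z)`; everything is `𝕋²`-periodic in `x` and 2-periodic in `z`. -/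
theorem stmt_12 (γ : ℝ) (hγ : 1 < γ) (t : ℝ)
    (r : ℝ → ℝ → ℝ → ℝ) (V1 V2 W : ℝ → ℝ → ℝ → ℝ → ℝ)
    (ρ : ℝ → ℝ → ℝ) (v1 v2 : ℝ → ℝ → ℝ → ℝ)
    (hrpos : ∀ x₁ x₂ s, 0 < r x₁ x₂ s)
    (hrC1 : ContDiff ℝ 1 (fun q : ℝ × ℝ × ℝ => r q.1 q.2.1 q.2.2))
    (hV1C1 : ContDiff ℝ 1 (fun q : ℝ × ℝ × ℝ × ℝ => V1 q.1 q.2.1 q.2.2.1 q.2.2.2))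
    (hV2C1 : ContDiff ℝ 1 (fun q : ℝ × ℝ × ℝ × ℝ => V2 q.1 q.2.1 q.2.2.1 q.2.2.2))
    (hWC1 : ContDiff ℝ 1 (fun q : ℝ × ℝ × ℝ × ℝ => W q.1 q.2.1 q.2.2.1 q.2.2.2))
    (hrper : ∀ x₁ x₂ s, r (x₁ + 1) x₂ s = r x₁ x₂ s ∧ r x₁ (x₂ + 1) s = r x₁ x₂ s)
    (hVWper : ∀ f ∈ [V1, V2, W], ∀ x₁ x₂ z s : ℝ,
      f (x₁ + 1) x₂ z s = f x₁ x₂ z s ∧ f x₁ (x₂ + 1) z s = f x₁ x₂ z s ∧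
      f x₁ x₂ (z + 2) s = f x₁ x₂ z s)
    (hρcont : Continuous (fun q : ℝ × ℝ => ρ q.1 q.2))
    (hρ0 : ∀ x₁ x₂, 0 ≤ ρ x₁ x₂)
    (hρper : ∀ x₁ x₂, ρ (x₁ + 1) x₂ = ρ x₁ x₂ ∧ ρ x₁ (x₂ + 1) = ρ x₁ x₂)
    (hvcont : Continuous (fun q : ℝ × ℝ × ℝ => v1 q.1 q.2.1 q.2.2) ∧
      Continuous (fun q : ℝ × ℝ × ℝ => v2 q.1 q.2.1 q.2.2))
    (hvper : ∀ f ∈ [v1, v2], ∀ x₁ x₂ z : ℝ,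
      f (x₁ + 1) x₂ z = f x₁ x₂ z ∧ f x₁ (x₂ + 1) z = f x₁ x₂ z ∧
      f x₁ x₂ (z + 2) = f x₁ x₂ z)
    -- the continuity equation for (r, V, W)
    (hcont : ∀ x₁ x₂ z s : ℝ,
      deriv (fun y => r x₁ x₂ y) s
        + deriv (fun y => r y x₂ s * V1 y x₂ z s) x₁
        + deriv (fun y => r x₁ y s * V2 x₁ y z s) x₂
        + r x₁ x₂ s * deriv (fun y => W x₁ x₂ y s) z = 0) :
    -(∫ a in (0:ℝ)..1, ∫ b in (0:ℝ)..1, ∫ c in (-1:ℝ)..1,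
        (ρ a b / r a b t *
            ((V1 a b c t - v1 a b c) * deriv (fun y => (r y b t) ^ γ) a
              + (V2 a b c t - v2 a b c) * deriv (fun y => (r a y t) ^ γ) b)
          + deriv (deriv (Ppot γ)) (r a b t) *
            ((ρ a b - r a b t) * deriv (fun y => r a b y) t
              + ρ a b * (v1 a b c * deriv (fun y => r y b t) a
                + v2 a b c * deriv (fun y => r a y t) b))
          + (ρ a b) ^ γ * (d1 V1 a b c t + d2 V2 a b c t)))
    = -(∫ a in (0:ℝ)..1, ∫ b in (0:ℝ)..1, ∫ c in (-1:ℝ)..1,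
        (d1 V1 a b c t + d2 V2 a b c t) *
          ((ρ a b) ^ γ - deriv (fun s : ℝ => s ^ γ) (r a b t) * (ρ a b - r a b t)
            - (r a b t) ^ γ)) :=
  stmt_12_general γ hγ t r V1 V2 W ρ v1 v2 hrpos hrC1 hV1C1 hV2C1 hWC1 hrper hVWper hρcont hcont
end
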